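/- arXiv:2604.00680 — 4 statements merged into one kernel-verified Lean document; each statement's English description precedes it below -/
import Mathlib

section
/- (Lemma 2 of the paper.) Let A ∈ ℝ^{n×n}, B ∈ ℝ^{n×m}, C ∈ ℝ^{p×n}, K ∈ ℝ^{r×n}. Then there exist nonnegative integers n₁, n₂, n₃ with n₁ + n₂ + n₃ = n and an orthogonal matrix P ∈ ℝ^{n×n} such that PᵀAP = [[A₁, 0, 0],[A₂₁, A₂, 0],[A₃₁, A₃₂, A₃]] (block lower triangular with diagonal blocks of sizes n₁, n₂, n₃) and CP = [C₁, 0, 0], where: (1) the pair (A₁, C₁) with A₁ ∈ ℝ^{n₁×n₁}, C₁ ∈ ℝ^{p×n₁} is observable; (2) every complex eigenvalue of A₂ ∈ ℝ^{n₂×n₂} has negative real part; (3) every complex eigenvalue of A₃ ∈ ℝ^{n₃×n₃} has nonnegative real part. -/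
/-!
The unobservable subspace `N = ⋂ⱼ ker (C Aʲ)` is `A`-invariant and lies in `ker C`, so an
orthonormal basis of `Nᗮ` followed by one of `N` makes `PᵀAP = [[A₁, 0], [E, D]]` and
`CP = [C₁, 0]`. The pair `(A₁, C₁)` is observable: if `C₁ A₁ʲ v = 0` for `j < n₁`, then for all `j`
by Cayley–Hamilton, and the lift of `v` to a vector supported on `Nᗮ` lies in `N`, hence is zero.

Over `ℂ` the characteristic polynomial of `D` is the product of the `X - μ` over its roots; the
factor `f` collecting the roots with `re μ < 0` and the complementary factor `g` are real, since the
roots come in conjugate pairs. `S = ker g(D)` is `D`-invariant, and an orthonormal basis of `Sᗮ`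
followed by one of `S` splits `D` into blocks `A₂, A₃` with `g(A₃) = 0` and, since
`g(D) f(D) = 0` puts the range of `f(D)` into `S`, `f(A₂) = 0`. So the eigenvalues of `A₂` are
roots of `f` and those of `A₃` roots of `g`.
-/

open Matrix Polynomial ComplexConjugate

namespace Polynomial

theorem exists_map_ofReal_eq_of_map_conj_eq {f : ℂ[X]} (hf : f.map conj = f) :
    ∃ g : ℝ[X], g.map (algebraMap ℝ ℂ) = f := by
  refine (mem_lifts f).mp ((lifts_iff_coeff_lifts f).mpr fun k => ?_)
  obtain ⟨x, hx⟩ := Complex.conj_eq_iff_real.mp (by simpa using congrArg (coeff · k) hf)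
  exact ⟨x, by simp [hx]⟩

theorem roots_map_ofReal_map_conj (χ : ℝ[X]) :
    (χ.map (algebraMap ℝ ℂ)).roots.map conj = (χ.map (algebraMap ℝ ℂ)).roots := by
  have hχ : (χ.map (algebraMap ℝ ℂ)).map conj = χ.map (algebraMap ℝ ℂ) := by
    rw [map_map]
    congr 1
    ext x
    simp
  rw [← (IsAlgClosed.splits _).roots_map, hχ]

theorem exists_map_ofReal_eq_prod_roots_filter (χ : ℝ[X]) (P : ℂ → Prop) [DecidablePred P]
    (hP : ∀ z, P (conj z) ↔ P z) :
    ∃ g : ℝ[X], g.map (algebraMap ℝ ℂ) =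
      (((χ.map (algebraMap ℝ ℂ)).roots.filter P).map (X - C ·)).prod := by
  apply exists_map_ofReal_eq_of_map_conj_eq
  set s := (χ.map (algebraMap ℝ ℂ)).roots
  have hs : (s.filter P).map conj = s.filter P := by
    have h := Multiset.filter_map (p := P) conj s
    rwa [roots_map_ofReal_map_conj, Multiset.filter_congr (p := P ∘ conj) (q := P) fun z _ => hP z,
      eq_comm] at h
  conv_rhs => rw [← hs]
  simp [Polynomial.map_multiset_prod, Multiset.map_map]

theorem mem_of_isRoot_multiset_prod_X_sub_C {s : Multiset ℂ} {μ : ℂ}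
    (h : ((s.map (X - C ·)).prod).IsRoot μ) : μ ∈ s := by
  simpa [IsRoot, eval_multiset_prod, Multiset.prod_eq_zero_iff, sub_eq_zero] using h

theorem exists_mul_eq_split_roots (χ : ℝ[X]) (hχ : χ.Monic) (P : ℂ → Prop)
    [DecidablePred P] (hP : ∀ z, P (conj z) ↔ P z) :
    ∃ p q : ℝ[X], p * q = χ ∧ (∀ μ, (p.map (algebraMap ℝ ℂ)).IsRoot μ → P μ) ∧
      (∀ μ, (q.map (algebraMap ℝ ℂ)).IsRoot μ → ¬ P μ) := by
  obtain ⟨p, hp⟩ := exists_map_ofReal_eq_prod_roots_filter χ P hP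
  obtain ⟨q, hq⟩ := exists_map_ofReal_eq_prod_roots_filter χ (¬ P ·) (fun z => not_congr (hP z))
  refine ⟨p, q, map_injective _ (algebraMap ℝ ℂ).injective ?_, fun μ hμ => ?_, fun μ hμ => ?_⟩
  · rw [Polynomial.map_mul, hp, hq, ← Multiset.prod_add, ← Multiset.map_add,
      Multiset.filter_add_not, ← (IsAlgClosed.splits _).eq_prod_roots_of_monic (hχ.map _)]
  · rw [hp] at hμ
    exact (Multiset.mem_filter.mp (mem_of_isRoot_multiset_prod_X_sub_C hμ)).2
  · rw [hq] at hμ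
    exact (Multiset.mem_filter.mp (mem_of_isRoot_multiset_prod_X_sub_C hμ)).2

end Polynomial

namespace Matrix

section Aeval

variable {m n R : Type*} [Fintype m] [Fintype n] [DecidableEq m] [DecidableEq n] [CommSemiring R]

theorem pow_mul_mul_of_mul_eq_one {P : Matrix m n R} {Q : Matrix n m R} (hPQ : P * Q = 1)
    (hQP : Q * P = 1) (M : Matrix m m R) (j : ℕ) : (Q * M * P) ^ j = Q * M ^ j * P := by
  induction j with
  | zero => simp [hQP]
  | succ j ih =>
    rw [pow_succ, ih, pow_succ]
    simp only [Matrix.mul_assoc]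
    rw [← Matrix.mul_assoc P Q, hPQ, Matrix.one_mul]

theorem aeval_mul_mul_of_mul_eq_one {P : Matrix m n R} {Q : Matrix n m R} (hPQ : P * Q = 1)
    (hQP : Q * P = 1) (M : Matrix m m R) (f : R[X]) :
    aeval (Q * M * P) f = Q * aeval M f * P := by
  induction f using Polynomial.induction_on' with
  | add f g hf hg => rw [map_add, map_add, hf, hg, Matrix.mul_add, Matrix.add_mul]
  | monomial j c =>
    rw [aeval_monomial, aeval_monomial, ← Algebra.smul_def, ← Algebra.smul_def,
      pow_mul_mul_of_mul_eq_one hPQ hQP, Matrix.mul_smul, Matrix.smul_mul]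

theorem exists_pow_fromBlocks_zero₁₂ (X : Matrix m m R) (Y : Matrix n m R) (Z : Matrix n n R)
    (j : ℕ) : ∃ W, fromBlocks X 0 Y Z ^ j = fromBlocks (X ^ j) 0 W (Z ^ j) := by
  induction j with
  | zero => exact ⟨0, by simp [fromBlocks_one]⟩
  | succ j ih =>
    obtain ⟨W, hW⟩ := ih
    exact ⟨W * X + Z ^ j * Y, by simp [pow_succ, hW, fromBlocks_multiply]⟩

theorem exists_aeval_fromBlocks_zero₁₂ (X : Matrix m m R) (Y : Matrix n m R) (Z : Matrix n n R)
    (f : R[X]) : ∃ W, aeval (fromBlocks X 0 Y Z) f = fromBlocks (aeval X f) 0 W (aeval Z f) := by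
  induction f using Polynomial.induction_on' with
  | add f g hf hg =>
    obtain ⟨W₁, h₁⟩ := hf
    obtain ⟨W₂, h₂⟩ := hg
    exact ⟨W₁ + W₂, by simp [h₁, h₂, fromBlocks_add]⟩
  | monomial j c =>
    obtain ⟨W, hW⟩ := exists_pow_fromBlocks_zero₁₂ X Y Z j
    exact ⟨c • W, by simp [aeval_monomial, ← Algebra.smul_def, hW, fromBlocks_smul]⟩

end Aeval

theorem transpose_mul_mul_apply {m n R : Type*} [Fintype m] [CommSemiring R] (P : Matrix m n R)
    (M : Matrix m m R) (s t : n) : (Pᵀ * M * P) s t = Pᵀ s ⬝ᵥ (M *ᵥ Pᵀ t) := by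
  rw [Matrix.mul_assoc]
  rfl

theorem isRoot_of_mem_spectrum {n : Type*} [Fintype n] [DecidableEq n] {M : Matrix n n ℝ}
    {f : ℝ[X]} (hf : aeval M f = 0) {μ : ℂ} (hμ : μ ∈ spectrum ℂ (M.map Complex.ofReal)) :
    (f.map (algebraMap ℝ ℂ)).IsRoot μ := by
  have hfM : aeval (M.map Complex.ofReal) (f.map (algebraMap ℝ ℂ)) = 0 := by
    rw [aeval_map_algebraMap, show M.map Complex.ofReal = (Algebra.ofId ℝ ℂ).mapMatrix M from rfl,
      aeval_algHom_apply, hf, map_zero]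
  have h := spectrum.subset_polynomial_aeval _ (f.map (algebraMap ℝ ℂ)) ⟨μ, hμ, rfl⟩
  rw [hfM, spectrum.mem_iff, sub_zero] at h
  by_contra hne
  exact h ((Ne.isUnit hne).map _)

theorem exists_orthogonal_adapted {k : ℕ} (W : Submodule ℝ (Fin k → ℝ)) :
    ∃ (a b : ℕ) (_ : a + b = k) (P : Matrix (Fin k) (Fin a ⊕ Fin b) ℝ),
      Pᵀ * P = 1 ∧ P * Pᵀ = 1 ∧ (∀ j, Pᵀ (Sum.inr j) ∈ W) ∧
      (∀ i, ∀ w ∈ W, Pᵀ (Sum.inl i) ⬝ᵥ w = 0) := by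
  let V : Submodule ℝ (EuclideanSpace ℝ (Fin k)) :=
    W.comap (WithLp.linearEquiv 2 ℝ (Fin k → ℝ)).toLinearMap
  let b := (((stdOrthonormalBasis ℝ V).prod (stdOrthonormalBasis ℝ Vᗮ)).map
    V.orthogonalDecomposition.symm).reindex (Equiv.sumComm _ _)
  let e := EuclideanSpace.basisFun (Fin k) ℝ
  have hcard : Module.finrank ℝ Vᗮ + Module.finrank ℝ V = k := by
    simpa using (Module.finrank_eq_card_basis b.toBasis).symm
  have hcol : ∀ s, (e.toBasis.toMatrix b)ᵀ s = b s := fun s => by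
    ext i
    simp [Module.Basis.toMatrix_apply, e]
  refine ⟨_, _, hcard, e.toBasis.toMatrix b, ?_, ?_, fun j => ?_, fun i w hw => ?_⟩
  · simpa [conjTranspose_eq_transpose_of_trivial] using
      e.toMatrix_orthonormalBasis_conjTranspose_mul_self b
  · simpa [conjTranspose_eq_transpose_of_trivial] using
      e.toMatrix_orthonormalBasis_self_mul_conjTranspose b
  · rw [hcol]
    show b (Sum.inr j) ∈ V
    simp [b]
  · have : inner ℝ (b (Sum.inl i)) (WithLp.toLp 2 w) = 0 :=
      Submodule.inner_left_of_mem_orthogonal (show WithLp.toLp 2 w ∈ V from hw) (by simp [b])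
    simpa [hcol, EuclideanSpace.inner_eq_star_dotProduct, dotProduct_comm] using this

theorem exists_orthogonal_fromBlocks_zero₁₂ {k : ℕ} (M : Matrix (Fin k) (Fin k) ℝ)
    (W : Submodule ℝ (Fin k → ℝ)) (hW : ∀ x ∈ W, M *ᵥ x ∈ W) :
    ∃ (a b : ℕ) (_ : a + b = k) (P : Matrix (Fin k) (Fin a ⊕ Fin b) ℝ),
      Pᵀ * P = 1 ∧ P * Pᵀ = 1 ∧ (∀ j, Pᵀ (Sum.inr j) ∈ W) ∧
      (∀ i, ∀ w ∈ W, Pᵀ (Sum.inl i) ⬝ᵥ w = 0) ∧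
      ∃ (X : Matrix (Fin a) (Fin a) ℝ) (Y : Matrix (Fin b) (Fin a) ℝ) (Z : Matrix (Fin b) (Fin b) ℝ),
        Pᵀ * M * P = fromBlocks X 0 Y Z := by
  obtain ⟨a, b, hab, P, hPtP, hPPt, hW₂, hW₁⟩ := exists_orthogonal_adapted W
  refine ⟨a, b, hab, P, hPtP, hPPt, hW₂, hW₁, (Pᵀ * M * P).toBlocks₁₁, (Pᵀ * M * P).toBlocks₂₁,
    (Pᵀ * M * P).toBlocks₂₂, ?_⟩
  have h₁₂ : (Pᵀ * M * P).toBlocks₁₂ = 0 := by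
    ext i j
    rw [toBlocks₁₂, of_apply, transpose_mul_mul_apply]
    exact hW₁ i _ (hW _ (hW₂ j))
  rw [← h₁₂, fromBlocks_toBlocks]

section Observability

variable {m n R : Type*} [Fintype n] [DecidableEq n] [CommRing R]

def IsObservable (A : Matrix n n R) (C : Matrix m n R) : Prop :=
  ∀ v : n → R, (∀ j < Fintype.card n, (C * A ^ j) *ᵥ v = 0) → v = 0

def unobservableSubspace (A : Matrix n n R) (C : Matrix m n R) : Submodule R (n → R) :=
  ⨅ j : ℕ, LinearMap.ker (C * A ^ j).mulVecLin

variable {A : Matrix n n R} {C : Matrix m n R} {x : n → R}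

theorem mem_unobservableSubspace :
    x ∈ unobservableSubspace A C ↔ ∀ j : ℕ, (C * A ^ j) *ᵥ x = 0 := by
  simp [unobservableSubspace]

theorem mulVec_mem_unobservableSubspace (hx : x ∈ unobservableSubspace A C) :
    A *ᵥ x ∈ unobservableSubspace A C := by
  rw [mem_unobservableSubspace] at hx ⊢
  intro j
  rw [mulVec_mulVec, Matrix.mul_assoc, ← pow_succ]
  exact hx (j + 1)

theorem mulVec_eq_zero_of_mem_unobservableSubspace (hx : x ∈ unobservableSubspace A C) :
    C *ᵥ x = 0 := by
  simpa using mem_unobservableSubspace.mp hx 0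

theorem mem_unobservableSubspace_of_forall_lt [Nontrivial R]
    (hx : ∀ j < Fintype.card n, (C * A ^ j) *ᵥ x = 0) : x ∈ unobservableSubspace A C := by
  refine mem_unobservableSubspace.mpr fun j => ?_
  rw [pow_eq_aeval_mod_charpoly, aeval_eq_sum_range, Matrix.mul_sum, sum_mulVec]
  refine Finset.sum_eq_zero fun i _ => ?_
  by_cases hi : (X ^ j %ₘ A.charpoly).coeff i = 0
  · simp [hi]
  have hlt : i < Fintype.card n := by
    have := (le_degree_of_ne_zero hi).trans_lt
      ((degree_modByMonic_lt _ A.charpoly_monic).trans_eq A.charpoly_degree_eq_dim)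
    exact_mod_cast this
  rw [Matrix.mul_smul, smul_mulVec, hx i hlt, smul_zero]

end Observability

theorem exists_orthogonal_observability_decomposition {n p : ℕ} (A : Matrix (Fin n) (Fin n) ℝ)
    (C : Matrix (Fin p) (Fin n) ℝ) :
    ∃ (n₁ k : ℕ) (_ : n₁ + k = n) (P : Matrix (Fin n) (Fin n₁ ⊕ Fin k) ℝ),
      Pᵀ * P = 1 ∧ P * Pᵀ = 1 ∧
      ∃ (A₁ : Matrix (Fin n₁) (Fin n₁) ℝ) (E : Matrix (Fin k) (Fin n₁) ℝ)
        (D : Matrix (Fin k) (Fin k) ℝ) (C₁ : Matrix (Fin p) (Fin n₁) ℝ),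
        Pᵀ * A * P = fromBlocks A₁ 0 E D ∧ C * P = fromCols C₁ 0 ∧ IsObservable A₁ C₁ := by
  obtain ⟨n₁, k, hk, P, hPtP, hPPt, hPN, hPperp, A₁, E, D, hPAP⟩ :=
    exists_orthogonal_fromBlocks_zero₁₂ A (unobservableSubspace A C)
      fun _ => mulVec_mem_unobservableSubspace
  set C₁ := (C * P).toCols₁
  have hCP : C * P = fromCols C₁ 0 := by
    have h₂ : (C * P).toCols₂ = 0 := by
      ext i j
      exact congrFun (mulVec_eq_zero_of_mem_unobservableSubspace (hPN j)) i
    rw [← h₂, fromCols_toCols]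
  have hpow (j : ℕ) : C * A ^ j * P = fromCols (C₁ * A₁ ^ j) 0 := by
    obtain ⟨W, hW⟩ := exists_pow_fromBlocks_zero₁₂ A₁ E D j
    calc C * A ^ j * P = C * P * (Pᵀ * A * P) ^ j := by
          rw [pow_mul_mul_of_mul_eq_one hPPt hPtP, ← Matrix.mul_assoc, ← Matrix.mul_assoc,
            Matrix.mul_assoc C P, hPPt, Matrix.mul_one]
      _ = fromCols (C₁ * A₁ ^ j) 0 := by
          rw [hCP, hPAP, hW, fromCols_mul_fromBlocks]
          simp
  refine ⟨n₁, k, hk, P, hPtP, hPPt, A₁, E, D, C₁, hPAP, hCP, fun v hv => ?_⟩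
  have hx : P *ᵥ Sum.elim v 0 ∈ unobservableSubspace A C := by
    refine mem_unobservableSubspace.mpr fun j => ?_
    rw [mulVec_mulVec, hpow, fromCols_mulVec_sumElim, mulVec_zero, add_zero]
    exact mem_unobservableSubspace.mp (mem_unobservableSubspace_of_forall_lt hv) j
  funext i
  calc v i = ((Pᵀ * P) *ᵥ Sum.elim v 0) (Sum.inl i) := by rw [hPtP, one_mulVec]; rfl
    _ = Pᵀ (Sum.inl i) ⬝ᵥ (P *ᵥ Sum.elim v 0) := by rw [← mulVec_mulVec]; rfl
    _ = 0 := hPperp i _ hx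

theorem exists_orthogonal_spectrum_split {k : ℕ} (D : Matrix (Fin k) (Fin k) ℝ)
    (S : ℂ → Prop) [DecidablePred S] (hS : ∀ z, S (conj z) ↔ S z) :
    ∃ (n₂ n₃ : ℕ) (_ : n₂ + n₃ = k) (Q : Matrix (Fin k) (Fin n₂ ⊕ Fin n₃) ℝ),
      Qᵀ * Q = 1 ∧ Q * Qᵀ = 1 ∧
      ∃ (A₂ : Matrix (Fin n₂) (Fin n₂) ℝ) (A₃₂ : Matrix (Fin n₃) (Fin n₂) ℝ)
        (A₃ : Matrix (Fin n₃) (Fin n₃) ℝ),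
        Qᵀ * D * Q = fromBlocks A₂ 0 A₃₂ A₃ ∧
        (∀ μ ∈ spectrum ℂ (A₂.map Complex.ofReal), S μ) ∧
        (∀ μ ∈ spectrum ℂ (A₃.map Complex.ofReal), ¬ S μ) := by
  obtain ⟨f, g, hfg, hf, hg⟩ := exists_mul_eq_split_roots D.charpoly D.charpoly_monic S hS
  have hker (x : Fin k → ℝ) : x ∈ LinearMap.ker (aeval D g).mulVecLin ↔ aeval D g *ᵥ x = 0 := by
    simp
  have hcomm : aeval D g * D = D * aeval D g := by
    simpa using congrArg (aeval D) (mul_comm g X)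
  obtain ⟨n₂, n₃, h, Q, hQtQ, hQQt, hQg, hQperp, A₂, A₃₂, A₃, hQDQ⟩ :=
    exists_orthogonal_fromBlocks_zero₁₂ D (LinearMap.ker (aeval D g).mulVecLin) fun x hx => by
      rw [hker, mulVec_mulVec, hcomm, ← mulVec_mulVec, (hker x).mp hx, mulVec_zero]
  have hblocks (h : ℝ[X]) :
      ∃ W, Qᵀ * aeval D h * Q = fromBlocks (aeval A₂ h) 0 W (aeval A₃ h) := by
    rw [← aeval_mul_mul_of_mul_eq_one hQQt hQtQ, hQDQ]
    exact exists_aeval_fromBlocks_zero₁₂ A₂ A₃₂ A₃ h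
  have hfA₂ : aeval A₂ f = 0 := by
    obtain ⟨W, hW⟩ := hblocks f
    ext i j
    have hij := congrFun (congrFun hW (Sum.inl i)) (Sum.inl j)
    rw [fromBlocks_apply₁₁, transpose_mul_mul_apply] at hij
    rw [zero_apply, ← hij]
    refine hQperp i _ ((hker _).mpr ?_)
    rw [mulVec_mulVec, ← map_mul, mul_comm, hfg, aeval_self_charpoly, zero_mulVec]
  have hgA₃ : aeval A₃ g = 0 := by
    obtain ⟨W, hW⟩ := hblocks g
    ext i j
    have hij := congrFun (congrFun hW (Sum.inr i)) (Sum.inr j)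
    rw [fromBlocks_apply₂₂, transpose_mul_mul_apply, (hker _).mp (hQg j), dotProduct_zero] at hij
    exact hij.symm
  exact ⟨n₂, n₃, h, Q, hQtQ, hQQt, A₂, A₃₂, A₃, hQDQ,
    fun μ hμ => hf μ (isRoot_of_mem_spectrum hfA₂ hμ),
    fun μ hμ => hg μ (isRoot_of_mem_spectrum hgA₃ hμ)⟩

end Matrix

theorem stmt_4_general (n p : ℕ) (A : Matrix (Fin n) (Fin n) ℝ)
    (C : Matrix (Fin p) (Fin n) ℝ) :
    ∃ (n₁ n₂ n₃ : ℕ) (_ : n₁ + n₂ + n₃ = n)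
      (P : Matrix (Fin n) (Fin n₁ ⊕ (Fin n₂ ⊕ Fin n₃)) ℝ),
      Pᵀ * P = 1 ∧ P * Pᵀ = 1 ∧
      ∃ (A₁ : Matrix (Fin n₁) (Fin n₁) ℝ)
        (A₂₁ : Matrix (Fin n₂) (Fin n₁) ℝ)
        (A₃₁ : Matrix (Fin n₃) (Fin n₁) ℝ)
        (A₂ : Matrix (Fin n₂) (Fin n₂) ℝ)
        (A₃₂ : Matrix (Fin n₃) (Fin n₂) ℝ)
        (A₃ : Matrix (Fin n₃) (Fin n₃) ℝ)
        (C₁ : Matrix (Fin p) (Fin n₁) ℝ),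
        Pᵀ * A * P =
          Matrix.fromBlocks A₁ 0 (Matrix.fromRows A₂₁ A₃₁) (Matrix.fromBlocks A₂ 0 A₃₂ A₃) ∧
        C * P = Matrix.fromCols C₁ 0 ∧
        (∀ v : Fin n₁ → ℝ, (∀ j : ℕ, j < n₁ → (C₁ * A₁ ^ j).mulVec v = 0) → v = 0) ∧
        (∀ μ ∈ spectrum ℂ (A₂.map Complex.ofReal), μ.re < 0) ∧
        (∀ μ ∈ spectrum ℂ (A₃.map Complex.ofReal), 0 ≤ μ.re) := by
  obtain ⟨n₁, k, hk, P, hPtP, hPPt, A₁, E, D, C₁, hPAP, hCP, hobs⟩ :=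
    exists_orthogonal_observability_decomposition A C
  obtain ⟨n₂, n₃, h₂₃, Q, hQtQ, hQQt, A₂, A₃₂, A₃, hQDQ, hA₂, hA₃⟩ :=
    exists_orthogonal_spectrum_split D (·.re < 0) fun z => by simp
  set R := fromBlocks (1 : Matrix (Fin n₁) (Fin n₁) ℝ) 0 0 Q
  have hRtR : Rᵀ * R = 1 := by
    simp [R, fromBlocks_transpose, fromBlocks_multiply, hQtQ, fromBlocks_one]
  have hRRt : R * Rᵀ = 1 := by
    simp [R, fromBlocks_transpose, fromBlocks_multiply, hQQt, fromBlocks_one]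
  refine ⟨n₁, n₂, n₃, by omega, P * R, ?_, ?_, A₁, (Qᵀ * E).toRows₁, (Qᵀ * E).toRows₂, A₂, A₃₂,
    A₃, C₁, ?_, ?_, fun v hv => hobs v (by simpa using hv), hA₂, fun μ hμ => not_lt.mp (hA₃ μ hμ)⟩
  · rw [transpose_mul, Matrix.mul_assoc, ← Matrix.mul_assoc Pᵀ, hPtP, Matrix.one_mul, hRtR]
  · rw [transpose_mul, Matrix.mul_assoc, ← Matrix.mul_assoc R, hRRt, Matrix.one_mul, hPPt]
  · calc (P * R)ᵀ * A * (P * R) = Rᵀ * (Pᵀ * A * P) * R := by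
          simp only [transpose_mul, Matrix.mul_assoc]
      _ = _ := by
          rw [hPAP, fromRows_toRows, ← hQDQ]
          simp [R, fromBlocks_transpose, fromBlocks_multiply, Matrix.mul_assoc]
  · rw [← Matrix.mul_assoc, hCP, fromCols_mul_fromBlocks]
    simp

/-- **Lemma 2 of the paper.** For `A ∈ ℝ^{n×n}`, `B ∈ ℝ^{n×m}`,
`C ∈ ℝ^{p×n}`, `K ∈ ℝ^{r×n}` there exist `n₁ + n₂ + n₃ = n` and an orthogonal
matrix `P` such that `PᵀAP` is block lower triangular with diagonal blocks
`A₁, A₂, A₃` of sizes `n₁, n₂, n₃`, `CP = [C₁, 0, 0]`, where `(A₁, C₁)` is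
observable, `A₂` has all complex eigenvalues with negative real part, and `A₃`
has all complex eigenvalues with nonnegative real part. -/
theorem stmt_4 (n m p r : ℕ) (A : Matrix (Fin n) (Fin n) ℝ) (B : Matrix (Fin n) (Fin m) ℝ)
    (C : Matrix (Fin p) (Fin n) ℝ) (K : Matrix (Fin r) (Fin n) ℝ) :
    ∃ (n₁ n₂ n₃ : ℕ) (_ : n₁ + n₂ + n₃ = n)
      (P : Matrix (Fin n) (Fin n₁ ⊕ (Fin n₂ ⊕ Fin n₃)) ℝ),
      Pᵀ * P = 1 ∧ P * Pᵀ = 1 ∧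
      ∃ (A₁ : Matrix (Fin n₁) (Fin n₁) ℝ)
        (A₂₁ : Matrix (Fin n₂) (Fin n₁) ℝ)
        (A₃₁ : Matrix (Fin n₃) (Fin n₁) ℝ)
        (A₂ : Matrix (Fin n₂) (Fin n₂) ℝ)
        (A₃₂ : Matrix (Fin n₃) (Fin n₂) ℝ)
        (A₃ : Matrix (Fin n₃) (Fin n₃) ℝ)
        (C₁ : Matrix (Fin p) (Fin n₁) ℝ),
        Pᵀ * A * P =
          Matrix.fromBlocks A₁ 0 (Matrix.fromRows A₂₁ A₃₁) (Matrix.fromBlocks A₂ 0 A₃₂ A₃) ∧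
        C * P = Matrix.fromCols C₁ 0 ∧
        (∀ v : Fin n₁ → ℝ, (∀ j : ℕ, j < n₁ → (C₁ * A₁ ^ j).mulVec v = 0) → v = 0) ∧
        (∀ μ ∈ spectrum ℂ (A₂.map Complex.ofReal), μ.re < 0) ∧
        (∀ μ ∈ spectrum ℂ (A₃.map Complex.ofReal), 0 ≤ μ.re) :=
  stmt_4_general n p A C
end

section
/- Let A₁ ∈ ℝ^{n₁×n₁} and C₁ ∈ ℝ^{p×n₁} be such that the pair (A₁, C₁) is observable. Then for every integer k ≥ 1 and every λ ∈ ℂ, the complex matrix D_{[A₁,C₁],k,λ} obtained by vertically stacking C₁, C₁(λI−A₁), …, C₁(λI−A₁)^{k−1}, and (λI−A₁)^k has rank n₁ (full column rank); equivalently, the only v ∈ ℂ^{n₁} with C₁(λI−A₁)^j v = 0 for all j = 0,…,k−1 and (λI−A₁)^k v = 0 is v = 0. -/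
/-! Write `N = λI − A`. A vector `v` killed by `D_{[A,C],k,λ}` satisfies `C Nⁱ v = 0` for `i < k`
and `Nᵏ v = 0`, hence `C Nⁱ v = 0` for every `i`. The subspace `{w | ∀ i, C Nⁱ w = 0}` is
`N`-invariant, hence invariant under `A = λI − N`, so `C Aʲ v = 0` for every `j`. The real and
imaginary parts of `v` then lie in the unobservable subspace of `(A, C)`, which is trivial. -/

open Matrix

/-- The stacked matrix `D_{[A,C],k,λ}`, obtained by vertically stacking the blocks
`C, C(λI−A), C(λI−A)², …, C(λI−A)^{k−1}` and `(λI−A)^k`, with real matrices coerced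
entrywise into `ℂ`. Rows of the block `C(λI−A)^j` are indexed by `(j, row of C)`. -/
noncomputable def Dstack {n : ℕ} {p : Type*} (k : ℕ) (A : Matrix (Fin n) (Fin n) ℝ)
    (C : Matrix p (Fin n) ℝ) (lam : ℂ) : Matrix ((Fin k × p) ⊕ Fin n) (Fin n) ℂ :=
  Matrix.fromRows
    (Matrix.of fun ki j =>
      ((C.map Complex.ofReal) *
        (lam • (1 : Matrix (Fin n) (Fin n) ℂ) - A.map Complex.ofReal) ^ (ki.1 : ℕ)) ki.2 j)
    ((lam • (1 : Matrix (Fin n) (Fin n) ℂ) - A.map Complex.ofReal) ^ k)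

namespace Matrix

variable {m n : Type*} [Fintype n]

theorem rank_eq_card_of_mulVec_eq_zero {K : Type*} [Field K] {A : Matrix m n K}
    (h : ∀ v, A *ᵥ v = 0 → v = 0) : A.rank = Fintype.card n := by
  have hinj : Function.Injective A.mulVecLin :=
    LinearMap.ker_eq_bot.mp (ker_mulVecLin_eq_bot_iff.mpr h)
  rw [rank, LinearMap.finrank_range_of_inj hinj, Module.finrank_fintype_fun_eq_card]

theorem re_map_ofReal_mulVec (M : Matrix m n ℝ) (v : n → ℂ) (i : m) :
    ((M.map (↑) *ᵥ v) i).re = (M *ᵥ fun j => (v j).re) i := by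
  simp [mulVec, dotProduct, Complex.re_sum]

theorem im_map_ofReal_mulVec (M : Matrix m n ℝ) (v : n → ℂ) (i : m) :
    ((M.map (↑) *ᵥ v) i).im = (M *ᵥ fun j => (v j).im) i := by
  simp [mulVec, dotProduct, Complex.im_sum]

theorem eq_zero_of_forall_map_ofReal_mulVec_eq_zero {ι : Type*} (M : ι → Matrix m n ℝ)
    (hM : ∀ w : n → ℝ, (∀ j, M j *ᵥ w = 0) → w = 0) {v : n → ℂ}
    (hv : ∀ j, (M j).map (↑) *ᵥ v = 0) : v = 0 := by
  have hre : (fun i => (v i).re) = 0 := hM _ fun j => funext fun i => by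
    rw [← re_map_ofReal_mulVec, hv]; rfl
  have him : (fun i => (v i).im) = 0 := hM _ fun j => funext fun i => by
    rw [← im_map_ofReal_mulVec, hv]; rfl
  exact funext fun i => Complex.ext (congrFun hre i) (congrFun him i)

variable [DecidableEq n]

theorem mul_pow_mulVec_eq_zero_of_pow_mulVec_eq_zero {R : Type*} [Semiring R] (C : Matrix m n R)
    (N : Matrix n n R) {k : ℕ} {v : n → R} (hC : ∀ i < k, (C * N ^ i) *ᵥ v = 0)
    (hN : N ^ k *ᵥ v = 0) (i : ℕ) : (C * N ^ i) *ᵥ v = 0 := by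
  rcases lt_or_ge i k with hik | hki
  · exact hC i hik
  · obtain ⟨d, rfl⟩ := Nat.exists_eq_add_of_le hki
    rw [add_comm k d, pow_add, ← Matrix.mul_assoc, ← mulVec_mulVec, hN, mulVec_zero]

theorem mul_pow_mulVec_eq_zero_of_forall_mul_smul_sub_pow {R : Type*} [CommRing R]
    (C : Matrix m n R) (A : Matrix n n R) (μ : R) {v : n → R}
    (hv : ∀ i : ℕ, (C * (μ • 1 - A) ^ i) *ᵥ v = 0) (j : ℕ) : (C * A ^ j) *ᵥ v = 0 := by
  set N := μ • 1 - A
  have hA : A = μ • 1 - N := (sub_sub_cancel _ _).symm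
  have hshift (i : ℕ) : C * N ^ i * A = μ • (C * N ^ i) - C * N ^ (i + 1) := by
    rw [hA, Matrix.mul_sub, Matrix.mul_smul, Matrix.mul_one, pow_succ, Matrix.mul_assoc]
  have hinv : ∀ j i : ℕ, (C * N ^ i) *ᵥ (A ^ j *ᵥ v) = 0 := by
    intro j
    induction j with
    | zero => simpa using hv
    | succ j ih =>
      intro i
      rw [pow_succ', ← mulVec_mulVec v A, mulVec_mulVec _ _ A, hshift, sub_mulVec, smul_mulVec,
        ih, ih, smul_zero, sub_zero]
  simpa [mulVec_mulVec] using hinv j 0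

end Matrix

theorem Dstack_mulVec_eq_zero_iff {n : ℕ} {p : Type*} (k : ℕ) (A : Matrix (Fin n) (Fin n) ℝ)
    (C : Matrix p (Fin n) ℝ) (lam : ℂ) (v : Fin n → ℂ) :
    Dstack k A C lam *ᵥ v = 0 ↔
      (∀ i < k, (C.map Complex.ofReal * (lam • 1 - A.map Complex.ofReal) ^ i) *ᵥ v = 0) ∧
        (lam • 1 - A.map Complex.ofReal) ^ k *ᵥ v = 0 := by
  rw [Dstack, fromRows_mulVec, ← Sum.elim_zero_zero, Sum.elim_eq_iff]
  refine and_congr_left' ⟨fun h i hi => funext fun r => congrFun h (⟨i, hi⟩, r),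
    fun h => funext fun ⟨⟨i, hi⟩, r⟩ => congrFun (h i hi) r⟩

/-- If the pair `(A₁, C₁)` is observable, then for every integer `k ≥ 1`
and every `λ ∈ ℂ`, the stacked matrix `D_{[A₁,C₁],k,λ}` has full column rank `n₁`. -/
theorem stmt_7 (n₁ p : ℕ) (A₁ : Matrix (Fin n₁) (Fin n₁) ℝ) (C₁ : Matrix (Fin p) (Fin n₁) ℝ)
    (hobs : ∀ v : Fin n₁ → ℝ, (∀ j : ℕ, j < n₁ → (C₁ * A₁ ^ j).mulVec v = 0) → v = 0) :
    ∀ k : ℕ, 1 ≤ k → ∀ lam : ℂ, (Dstack k A₁ C₁ lam).rank = n₁ := by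
  intro k _ lam
  refine (rank_eq_card_of_mulVec_eq_zero fun v hv => ?_).trans (Fintype.card_fin n₁)
  obtain ⟨hC, hN⟩ := (Dstack_mulVec_eq_zero_iff k A₁ C₁ lam v).1 hv
  refine eq_zero_of_forall_map_ofReal_mulVec_eq_zero (fun j : Fin n₁ => C₁ * A₁ ^ (j : ℕ))
    (fun w hw => hobs w fun j hj => hw ⟨j, hj⟩) fun j => ?_
  rw [show Complex.ofReal = Complex.ofRealHom from rfl, Matrix.map_mul, Matrix.map_pow]
  exact mul_pow_mulVec_eq_zero_of_forall_mul_smul_sub_pow _ _ lam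
    (mul_pow_mulVec_eq_zero_of_pow_mulVec_eq_zero _ _ hC hN) j
end

section
/- Let l ≥ 2 and q ≥ 1. Let 𝓛 ∈ ℝ^{l×l} be such that S := 𝓛 + 𝓛ᵀ is positive semidefinite and the kernel of S is exactly the span of the all-ones vector 𝟏 ∈ ℝ^l; let λ₂ > 0 be the smallest nonzero eigenvalue of S. Let N̄ ∈ ℝ^{q×q} and let P̄ ∈ ℝ^{q×q} be symmetric positive definite with N̄ᵀP̄ + P̄N̄ negative definite. Let N₁,…,N_l ∈ ℝ^{q×q} satisfy ∑_{i=1}^{l} N_i = l·N̄. Define the block-diagonal matrices N := blkdiag(N₁,…,N_l) ∈ ℝ^{lq×lq} and M := I_l ⊗ P̄^{-1} ∈ ℝ^{lq×lq}. Let Λ₁ be the largest eigenvalue of NᵀM^{-1} + M^{-1}N, let Λ₂ < 0 be the largest eigenvalue of N̄ᵀP̄ + P̄N̄, and let Λ₃ be the largest eigenvalue of (NᵀM^{-1} + M^{-1}N)². Then for every scalar γ > (Λ₁ − Λ₃/Λ₂)/λ₂, every complex eigenvalue of the matrix N − γ M (𝓛 ⊗ I_q) has negative real part. -/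
open Matrix Kronecker

/-!
Put `P = M⁻¹ = I ⊗ P̄`, `Q = NᵀP + PN` and `S = 𝓛 + 𝓛ᵀ`. The matrix `A = N - γ M (𝓛 ⊗ I)`
satisfies the Lyapunov identity `AᵀP + PA = Q - γ (S ⊗ I)`, and a real matrix with such a
Lyapunov pair is Hurwitz (test the identity on a complex eigenvector), so it suffices to show
that `Q - γ (S ⊗ I)` is negative definite.

Split `x = 𝟏 ⊗ v + y` with `y` summing to zero over the agents. Since
`Q = blkdiag(N_iᵀP̄ + P̄N_i)` and `∑ N_i = l N̄`, the consensus part `z = 𝟏 ⊗ v` satisfies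
`zᵀQz ≤ Λ₂ |z|²`; `S ⊗ I` annihilates `z` and is at least `λ₂ |y|²` on `y`; the cross term is at
most `√Λ₃ |z| |y|`. The resulting quadratic form in `(|z|, |y|)` is negative definite as soon as
`Λ₂ (Λ₁ - γ λ₂) > Λ₃`, which is the hypothesis on `γ`. Testing `Q` on a consensus vector also
gives `Λ₁ Λ₂ ≤ Λ₃`, hence `γ > 0`.
-/

theorem mul_add_two_mul_add_mul_neg {α β δ a b c : ℝ} (hα : α < 0) (hδ₀ : 0 ≤ δ)
    (hδ : δ < α * β) (ha : 0 ≤ a) (hb : 0 ≤ b) (hab : 0 < a + b) (hc : c ^ 2 ≤ δ * a * b) :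
    α * a + 2 * c + β * b < 0 := by
  have hβ : β < 0 := by nlinarith
  have hneg : α * a + β * b < 0 := by
    rcases ha.eq_or_lt with rfl | ha
    · nlinarith
    · nlinarith [mul_nonpos_of_nonpos_of_nonneg hβ.le hb]
  -- When `ab > 0`: `(αa + βb)² ≥ 4αβab > 4δab ≥ (2c)²`.
  have hs : (2 * c) ^ 2 < (-(α * a + β * b)) ^ 2 := by
    rcases (mul_nonneg ha hb).eq_or_lt with h | h
    · nlinarith [mul_assoc δ a b]
    · nlinarith [sq_nonneg (α * a - β * b)]
  linarith [(abs_lt_of_sq_lt_sq' hs (by linarith)).2]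

theorem mul_le_of_le_mul_of_sq_le {Λ₁ Λ₂ Λ₃ a c : ℝ} (hΛ₂ : Λ₂ < 0) (ha : 0 < a)
    (h₂ : c ≤ Λ₂ * a) (h₁ : c ≤ Λ₁ * a) (h₃ : c ^ 2 ≤ Λ₃ * a * a) : Λ₁ * Λ₂ ≤ Λ₃ := by
  have hc : c < 0 := by nlinarith
  have : Λ₁ * Λ₂ * (a * a) ≤ c ^ 2 := by
    rcases le_or_gt 0 Λ₁ with h | h
    · nlinarith [mul_nonpos_of_nonneg_of_nonpos h hΛ₂.le, mul_pos ha ha]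
    · nlinarith [mul_nonneg (neg_nonneg.2 hc.le) (sub_nonneg.2 h₂),
        mul_nonneg (neg_nonneg.2 (mul_nonpos_of_nonpos_of_nonneg hΛ₂.le ha.le)) (sub_nonneg.2 h₁)]
  exact le_of_mul_le_mul_right (by nlinarith) (mul_pos ha ha)

namespace Matrix

section Lyapunov

variable {n : Type*} [Fintype n]

theorem exists_mulVec_eq_smul_of_mem_spectrum [DecidableEq n] {K : Type*} [Field K]
    {A : Matrix n n K} {μ : K} (h : μ ∈ spectrum K A) : ∃ v ≠ 0, A *ᵥ v = μ • v := by
  rw [← spectrum_toLin', ← Module.End.hasEigenvalue_iff_mem_spectrum] at h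
  obtain ⟨v, hv⟩ := h.exists_hasEigenvector
  exact ⟨v, hv.2, by simpa using hv.apply_eq_smul⟩

theorem re_star_dotProduct_map_ofReal_mulVec (R : Matrix n n ℝ) (v : n → ℂ) :
    (star v ⬝ᵥ (R.map Complex.ofReal *ᵥ v)).re =
      (fun i ↦ (v i).re) ⬝ᵥ (R *ᵥ fun i ↦ (v i).re) +
        (fun i ↦ (v i).im) ⬝ᵥ (R *ᵥ fun i ↦ (v i).im) := by
  simp only [dotProduct, mulVec, Pi.star_apply, Finset.mul_sum, Complex.re_sum, map_apply,
    ← Finset.sum_add_distrib, Complex.star_def, Complex.mul_re, Complex.mul_im, Complex.conj_re,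
    Complex.conj_im, Complex.ofReal_re, Complex.ofReal_im]
  refine Finset.sum_congr rfl fun i _ ↦ Finset.sum_congr rfl fun j _ ↦ ?_
  ring

theorem PosDef.re_star_dotProduct_map_ofReal_mulVec_pos {R : Matrix n n ℝ} (hR : R.PosDef)
    {v : n → ℂ} (hv : v ≠ 0) : 0 < (star v ⬝ᵥ (R.map Complex.ofReal *ᵥ v)).re := by
  have hquad (w : n → ℝ) : 0 ≤ w ⬝ᵥ (R *ᵥ w) := by
    simpa using hR.posSemidef.dotProduct_mulVec_nonneg w
  have hquad_pos {w : n → ℝ} (hw : w ≠ 0) : 0 < w ⬝ᵥ (R *ᵥ w) := by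
    simpa using hR.dotProduct_mulVec_pos hw
  rw [re_star_dotProduct_map_ofReal_mulVec]
  by_cases hre : (fun i ↦ (v i).re) = 0
  · have him : (fun i ↦ (v i).im) ≠ 0 := fun him ↦
      hv (funext fun i ↦ Complex.ext (congrFun hre i) (congrFun him i))
    linarith [hquad (fun i ↦ (v i).re), hquad_pos him]
  · linarith [hquad (fun i ↦ (v i).im), hquad_pos hre]

theorem star_dotProduct_lyapunov_mulVec_of_mulVec_eq_smul (A P : Matrix n n ℝ) {μ : ℂ}
    {v : n → ℂ} (hv : A.map Complex.ofReal *ᵥ v = μ • v) :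
    star v ⬝ᵥ ((Aᵀ * P + P * A).map Complex.ofReal *ᵥ v) =
      ((2 * μ.re : ℝ) : ℂ) * (star v ⬝ᵥ (P.map Complex.ofReal *ᵥ v)) := by
  set Ac := A.map Complex.ofReal
  set Pc := P.map Complex.ofReal
  have hstar : star v ᵥ* Acᵀ = star μ • star v := by
    rw [vecMul_transpose, ← star_smul, ← hv]
    ext i
    simp [Ac, mulVec, dotProduct]
  have hmap : (Aᵀ * P + P * A).map Complex.ofReal = Acᵀ * Pc + Pc * Ac := by
    ext i j
    simp [Ac, Pc, mul_apply]
  rw [hmap, add_mulVec, dotProduct_add, ← mulVec_mulVec, ← mulVec_mulVec, dotProduct_mulVec,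
    hstar, hv, mulVec_smul, smul_dotProduct, dotProduct_smul, smul_eq_mul, smul_eq_mul,
    ← add_mul, Complex.star_def, add_comm, Complex.add_conj]

theorem re_lt_zero_of_mem_spectrum_of_lyapunov [DecidableEq n] {A P : Matrix n n ℝ}
    (hP : P.PosDef) (hL : (-(Aᵀ * P + P * A)).PosDef) {μ : ℂ}
    (hμ : μ ∈ spectrum ℂ (A.map Complex.ofReal)) : μ.re < 0 := by
  obtain ⟨v, hv0, hv⟩ := exists_mulVec_eq_smul_of_mem_spectrum hμ
  have hLv := hL.re_star_dotProduct_map_ofReal_mulVec_pos hv0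
  rw [Matrix.map_neg _ Complex.ofReal_neg, neg_mulVec, dotProduct_neg, Complex.neg_re,
    star_dotProduct_lyapunov_mulVec_of_mulVec_eq_smul A P hv, Complex.re_ofReal_mul] at hLv
  nlinarith [hP.re_star_dotProduct_map_ofReal_mulVec_pos hv0]

theorem transpose_sub_smul_mul_mul_inv_add {R : Type*} [CommRing R] [DecidableEq n]
    (N M L : Matrix n n R) (γ : R) (hM : Mᵀ = M) (hdet : IsUnit M.det) :
    (N - γ • (M * L))ᵀ * M⁻¹ + M⁻¹ * (N - γ • (M * L)) =
      Nᵀ * M⁻¹ + M⁻¹ * N - γ • (Lᵀ + L) := by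
  rw [transpose_sub, transpose_smul, transpose_mul, hM, sub_mul, mul_sub, smul_mul_assoc,
    mul_smul_comm, mul_assoc, mul_nonsing_inv _ hdet, ← mul_assoc, nonsing_inv_mul _ hdet,
    mul_one, one_mul, smul_add]
  abel

theorem isHermitian_transpose_mul_add_mul {P : Matrix n n ℝ} (hP : P.IsHermitian)
    (N : Matrix n n ℝ) : (Nᵀ * P + P * N).IsHermitian := by
  rw [IsHermitian, conjTranspose_eq_transpose_of_trivial, transpose_add, transpose_mul,
    transpose_mul, transpose_transpose, ← conjTranspose_eq_transpose_of_trivial P, hP.eq,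
    add_comm]

end Lyapunov

section Rayleigh

variable {n : Type*} [Fintype n]

theorem dotProduct_self_nonneg (x : n → ℝ) : 0 ≤ x ⬝ᵥ x :=
  Finset.sum_nonneg fun i _ ↦ mul_self_nonneg (x i)

theorem _root_.OrthonormalBasis.dotProduct_self_eq_sum_sq
    (b : OrthonormalBasis n ℝ (EuclideanSpace ℝ n)) (x : n → ℝ) :
    x ⬝ᵥ x = ∑ i, (⇑(b i) ⬝ᵥ x) ^ 2 := by
  have := b.sum_inner_mul_inner (WithLp.toLp 2 x) (WithLp.toLp 2 x)
  simp only [EuclideanSpace.inner_eq_star_dotProduct, star_trivial] at this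
  rw [← this]
  exact Finset.sum_congr rfl fun i _ ↦ by rw [dotProduct_comm x, sq]

variable [DecidableEq n] {A : Matrix n n ℝ}

theorem IsHermitian.dotProduct_mulVec_eq_sum_eigenvalues (hA : A.IsHermitian) (x : n → ℝ) :
    x ⬝ᵥ (A *ᵥ x) = ∑ i, hA.eigenvalues i * (⇑(hA.eigenvectorBasis i) ⬝ᵥ x) ^ 2 := by
  have := hA.eigenvectorBasis.sum_inner_mul_inner (WithLp.toLp 2 (A *ᵥ x)) (WithLp.toLp 2 x)
  simp only [EuclideanSpace.inner_eq_star_dotProduct, star_trivial] at this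
  rw [← this]
  refine Finset.sum_congr rfl fun i _ ↦ ?_
  rw [dotProduct_mulVec, ← mulVec_transpose, ← conjTranspose_eq_transpose_of_trivial, hA.eq,
    hA.mulVec_eigenvectorBasis, smul_dotProduct, smul_eq_mul, dotProduct_comm x]
  ring

theorem IsHermitian.dotProduct_mulVec_le (hA : A.IsHermitian) {Λ : ℝ}
    (h : ∀ μ ∈ spectrum ℝ A, μ ≤ Λ) (x : n → ℝ) : x ⬝ᵥ (A *ᵥ x) ≤ Λ * (x ⬝ᵥ x) := by
  rw [hA.dotProduct_mulVec_eq_sum_eigenvalues, hA.eigenvectorBasis.dotProduct_self_eq_sum_sq,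
    Finset.mul_sum]
  exact Finset.sum_le_sum fun i _ ↦
    mul_le_mul_of_nonneg_right (h _ (hA.eigenvalues_mem_spectrum_real i)) (sq_nonneg _)

theorem IsHermitian.le_dotProduct_mulVec_of_forall_mulVec_eq_zero (hA : A.IsHermitian) {c : ℝ}
    (h : ∀ μ ∈ spectrum ℝ A, μ ≠ 0 → c ≤ μ) {x : n → ℝ}
    (hx : ∀ u, A *ᵥ u = 0 → u ⬝ᵥ x = 0) : c * (x ⬝ᵥ x) ≤ x ⬝ᵥ (A *ᵥ x) := by
  rw [hA.dotProduct_mulVec_eq_sum_eigenvalues, hA.eigenvectorBasis.dotProduct_self_eq_sum_sq,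
    Finset.mul_sum]
  refine Finset.sum_le_sum fun i _ ↦ ?_
  by_cases hi : hA.eigenvalues i = 0
  · rw [hx _ (by rw [hA.mulVec_eigenvectorBasis, hi, zero_smul])]
    simp
  · exact mul_le_mul_of_nonneg_right (h _ (hA.eigenvalues_mem_spectrum_real i) hi) (sq_nonneg _)

theorem IsHermitian.sq_dotProduct_mulVec_le (hA : A.IsHermitian) {Λ : ℝ}
    (h : ∀ μ ∈ spectrum ℝ (A ^ 2), μ ≤ Λ) (x y : n → ℝ) :
    (x ⬝ᵥ (A *ᵥ y)) ^ 2 ≤ Λ * (x ⬝ᵥ x) * (y ⬝ᵥ y) := by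
  have hAT : Aᵀ = A := by rw [← conjTranspose_eq_transpose_of_trivial, hA.eq]
  have hsq : (A *ᵥ x) ⬝ᵥ (A *ᵥ x) = x ⬝ᵥ (A ^ 2 *ᵥ x) := by
    rw [sq, ← mulVec_mulVec, dotProduct_mulVec x, ← mulVec_transpose, hAT]
  calc (x ⬝ᵥ (A *ᵥ y)) ^ 2 = ((A *ᵥ x) ⬝ᵥ y) ^ 2 := by
        rw [dotProduct_mulVec, ← mulVec_transpose, hAT]
    _ ≤ ((A *ᵥ x) ⬝ᵥ (A *ᵥ x)) * (y ⬝ᵥ y) := by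
        simpa only [dotProduct, sq] using Finset.sum_mul_sq_le_sq_mul_sq Finset.univ (A *ᵥ x) y
    _ ≤ Λ * (x ⬝ᵥ x) * (y ⬝ᵥ y) := by
        rw [hsq]
        exact mul_le_mul_of_nonneg_right ((hA.pow 2).dotProduct_mulVec_le h x)
          (dotProduct_self_nonneg y)

end Rayleigh

section Blocks

variable {ι κ R : Type*} [Fintype ι] [Fintype κ] [CommSemiring R]

theorem const_dotProduct_const (v w : κ → R) :
    (fun p : ι × κ ↦ v p.2) ⬝ᵥ (fun p ↦ w p.2) = Fintype.card ι * (v ⬝ᵥ w) := by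
  simp [dotProduct, Fintype.sum_prod_type]

variable [DecidableEq ι] [DecidableEq κ]

/-- `blkdiag(B₁, …, B_l)`, indexed by `ι × κ` with the block index first (unlike
`Matrix.blockDiagonal`, which puts it second). -/
def blkdiag (B : ι → Matrix κ κ R) : Matrix (ι × κ) (ι × κ) R :=
  reindexAlgEquiv R R (Equiv.prodComm κ ι) (blockDiagonal B)

theorem blkdiag_apply (B : ι → Matrix κ κ R) (i j : ι) (s t : κ) :
    blkdiag B (i, s) (j, t) = if i = j then B i s t else 0 := by
  simp [blkdiag, blockDiagonal_apply']

theorem transpose_blkdiag (B : ι → Matrix κ κ R) : (blkdiag B)ᵀ = blkdiag fun i ↦ (B i)ᵀ := by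
  simp [blkdiag, blockDiagonal_transpose]

theorem blkdiag_mul (B C : ι → Matrix κ κ R) :
    blkdiag B * blkdiag C = blkdiag fun i ↦ B i * C i := by
  rw [blkdiag, blkdiag, ← map_mul, ← blockDiagonal_mul, blkdiag]

theorem blkdiag_add (B C : ι → Matrix κ κ R) :
    blkdiag B + blkdiag C = blkdiag fun i ↦ B i + C i := by
  rw [blkdiag, blkdiag, ← map_add, ← blockDiagonal_add, blkdiag]
  rfl

theorem one_kronecker_eq_blkdiag (P : Matrix κ κ R) :
    (1 : Matrix ι ι R) ⊗ₖ P = blkdiag fun _ ↦ P := by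
  ext ⟨i, s⟩ ⟨j, t⟩
  simp [blkdiag_apply, one_apply, ite_mul]

theorem blkdiag_mulVec_const (B : ι → Matrix κ κ R) (w : κ → R) :
    blkdiag B *ᵥ (fun p : ι × κ ↦ w p.2) = fun p ↦ (B p.1 *ᵥ w) p.2 := by
  ext ⟨i, s⟩
  simp [mulVec, dotProduct, Fintype.sum_prod_type, blkdiag_apply, ite_mul]

theorem const_dotProduct_blkdiag_mulVec_const (B : ι → Matrix κ κ R) (v w : κ → R) :
    (fun p : ι × κ ↦ v p.2) ⬝ᵥ (blkdiag B *ᵥ fun p ↦ w p.2) = v ⬝ᵥ ((∑ i, B i) *ᵥ w) := by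
  rw [blkdiag_mulVec_const]
  simp only [dotProduct, mulVec, Fintype.sum_prod_type, Matrix.sum_apply, Finset.sum_mul,
    Finset.mul_sum]
  rw [Finset.sum_comm]
  exact Finset.sum_congr rfl fun _ _ ↦ Finset.sum_comm

theorem const_dotProduct_blkdiag_mulVec_const_le {B : ι → Matrix κ κ ℝ} {C : Matrix κ κ ℝ}
    (hC : C.IsHermitian) (hB : ∑ i, B i = (Fintype.card ι : ℝ) • C) {Λ : ℝ}
    (hΛ : ∀ μ ∈ spectrum ℝ C, μ ≤ Λ) (v : κ → ℝ) :
    (fun p : ι × κ ↦ v p.2) ⬝ᵥ (blkdiag B *ᵥ fun p ↦ v p.2) ≤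
      Λ * ((fun p : ι × κ ↦ v p.2) ⬝ᵥ fun p ↦ v p.2) := by
  rw [const_dotProduct_blkdiag_mulVec_const, hB, const_dotProduct_const, smul_mulVec,
    dotProduct_smul, smul_eq_mul, mul_left_comm]
  exact mul_le_mul_of_nonneg_left (hC.dotProduct_mulVec_le hΛ v) (Nat.cast_nonneg _)

end Blocks

section Consensus

variable {ι κ : Type*} [Fintype ι]

theorem exists_eq_const_add_and_sum_eq_zero [Nonempty ι] (x : ι × κ → ℝ) :
    ∃ (v : κ → ℝ) (y : ι × κ → ℝ), x = (fun p ↦ v p.2) + y ∧ ∀ s, ∑ i, y (i, s) = 0 := by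
  refine ⟨fun s ↦ (∑ i, x (i, s)) / Fintype.card ι, _, (add_sub_cancel _ x).symm, fun s ↦ ?_⟩
  simp only [Pi.sub_apply, Finset.sum_sub_distrib, Finset.sum_const, Finset.card_univ,
    nsmul_eq_mul]
  field_simp
  ring

variable [Fintype κ]

theorem dotProduct_kronecker_one_mulVec [DecidableEq κ] {R : Type*} [CommSemiring R]
    (S : Matrix ι ι R) (x y : ι × κ → R) :
    x ⬝ᵥ ((S ⊗ₖ (1 : Matrix κ κ R)) *ᵥ y) =
      ∑ s, (fun i ↦ x (i, s)) ⬝ᵥ (S *ᵥ fun i ↦ y (i, s)) := by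
  simp only [dotProduct, mulVec, kroneckerMap_apply, one_apply, mul_ite, mul_one, mul_zero,
    ite_mul, zero_mul, Fintype.sum_prod_type, Finset.sum_ite_eq, Finset.mem_univ, ↓reduceIte,
    Finset.mul_sum]
  exact Finset.sum_comm

theorem dotProduct_self_eq_sum_dotProduct_self {R : Type*} [CommSemiring R] (x : ι × κ → R) :
    x ⬝ᵥ x = ∑ s, (fun i ↦ x (i, s)) ⬝ᵥ (fun i ↦ x (i, s)) := by
  simp only [dotProduct, Fintype.sum_prod_type]
  exact Finset.sum_comm

theorem add_dotProduct_mulVec_add_of_mulVec_eq_zero {n R : Type*} [Fintype n] [CommRing R]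
    {A : Matrix n n R} (hA : Aᵀ = A) {u : n → R} (hu : A *ᵥ u = 0) (w : n → R) :
    (u + w) ⬝ᵥ (A *ᵥ (u + w)) = w ⬝ᵥ (A *ᵥ w) := by
  rw [mulVec_add, hu, zero_add, add_dotProduct, dotProduct_mulVec u, ← mulVec_transpose, hA, hu,
    zero_dotProduct, zero_add]

variable [DecidableEq ι] [DecidableEq κ]

theorem le_const_add_dotProduct_kronecker_one_mulVec {S : Matrix ι ι ℝ} (hS : S.IsHermitian)
    (hker : ∀ u : ι → ℝ, S *ᵥ u = 0 ↔ ∃ c : ℝ, u = fun _ ↦ c) {c : ℝ}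
    (hgap : ∀ μ ∈ spectrum ℝ S, μ ≠ 0 → c ≤ μ) (v : κ → ℝ) {y : ι × κ → ℝ}
    (hy : ∀ s, ∑ i, y (i, s) = 0) :
    c * (y ⬝ᵥ y) ≤
      ((fun p ↦ v p.2) + y) ⬝ᵥ ((S ⊗ₖ (1 : Matrix κ κ ℝ)) *ᵥ ((fun p ↦ v p.2) + y)) := by
  have hST : Sᵀ = S := by rw [← conjTranspose_eq_transpose_of_trivial, hS.eq]
  rw [dotProduct_kronecker_one_mulVec, dotProduct_self_eq_sum_dotProduct_self, Finset.mul_sum]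
  refine Finset.sum_le_sum fun s _ ↦ ?_
  rw [show (fun i ↦ ((fun p : ι × κ ↦ v p.2) + y) (i, s)) = (fun _ ↦ v s) + fun i ↦ y (i, s)
    from rfl, add_dotProduct_mulVec_add_of_mulVec_eq_zero hST ((hker _).2 ⟨v s, rfl⟩)]
  refine hS.le_dotProduct_mulVec_of_forall_mulVec_eq_zero hgap fun u hu ↦ ?_
  obtain ⟨a, rfl⟩ := (hker u).1 hu
  simp [dotProduct, ← Finset.mul_sum, hy s]

theorem posDef_neg_sub_smul_kronecker_one [Nonempty ι] [Nonempty κ]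
    {Q : Matrix (ι × κ) (ι × κ) ℝ} (hQ : Q.IsHermitian) {S : Matrix ι ι ℝ} (hS : S.IsHermitian)
    (hker : ∀ u : ι → ℝ, S *ᵥ u = 0 ↔ ∃ c : ℝ, u = fun _ ↦ c) {lam₂ Λ₁ Λ₂ Λ₃ γ : ℝ}
    (hlam₂ : 0 < lam₂) (hgap : ∀ μ ∈ spectrum ℝ S, μ ≠ 0 → lam₂ ≤ μ)
    (hΛ₁ : ∀ μ ∈ spectrum ℝ Q, μ ≤ Λ₁) (hΛ₂ : Λ₂ < 0)
    (hconst : ∀ v : κ → ℝ, (fun p : ι × κ ↦ v p.2) ⬝ᵥ (Q *ᵥ fun p ↦ v p.2) ≤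
      Λ₂ * ((fun p : ι × κ ↦ v p.2) ⬝ᵥ fun p ↦ v p.2))
    (hΛ₃ : ∀ μ ∈ spectrum ℝ (Q ^ 2), μ ≤ Λ₃) (hγ : (Λ₁ - Λ₃ / Λ₂) / lam₂ < γ) :
    (-(Q - γ • (S ⊗ₖ (1 : Matrix κ κ ℝ)))).PosDef := by
  obtain ⟨s₀⟩ := ‹Nonempty κ›
  obtain ⟨i₀⟩ := ‹Nonempty ι›
  set z₀ : ι × κ → ℝ := fun p ↦ (Pi.single s₀ 1 : κ → ℝ) p.2
  have hz₀ : 0 < z₀ ⬝ᵥ z₀ := by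
    refine lt_of_le_of_ne (dotProduct_self_nonneg z₀) (Ne.symm fun h ↦ ?_)
    simpa [z₀] using congrFun (dotProduct_self_eq_zero.mp h) (i₀, s₀)
  have hz₀Q := hQ.sq_dotProduct_mulVec_le hΛ₃ z₀ z₀
  have hΛ₃₀ : 0 ≤ Λ₃ := by nlinarith [sq_nonneg (z₀ ⬝ᵥ (Q *ᵥ z₀)), mul_pos hz₀ hz₀]
  have hΛ₁₂ : Λ₃ / Λ₂ ≤ Λ₁ := (div_le_iff_of_neg hΛ₂).mpr <|
    mul_le_of_le_mul_of_sq_le hΛ₂ hz₀ (hconst _) (hQ.dotProduct_mulVec_le hΛ₁ z₀) hz₀Q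
  have hγ₀ : 0 < γ := lt_of_le_of_lt (div_nonneg (by linarith) hlam₂.le) hγ
  have hdisc : Λ₃ < Λ₂ * (Λ₁ - γ * lam₂) := by
    rw [mul_comm, ← lt_div_iff_of_neg hΛ₂]
    linarith [(div_lt_iff₀ hlam₂).mp hγ]
  have hK : (S ⊗ₖ (1 : Matrix κ κ ℝ)).IsHermitian := by
    rw [IsHermitian, conjTranspose_kronecker, hS.eq, conjTranspose_one]
  refine .of_dotProduct_mulVec_pos (hQ.sub (hK.smul (IsSelfAdjoint.all γ))).neg fun x hx ↦ ?_
  obtain ⟨v, y, rfl, hy⟩ := exists_eq_const_add_and_sum_eq_zero x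
  set z : ι × κ → ℝ := fun p ↦ v p.2
  have hQT : Qᵀ = Q := by rw [← conjTranspose_eq_transpose_of_trivial, hQ.eq]
  have hQzy : (z + y) ⬝ᵥ (Q *ᵥ (z + y)) =
      z ⬝ᵥ (Q *ᵥ z) + 2 * (z ⬝ᵥ (Q *ᵥ y)) + y ⬝ᵥ (Q *ᵥ y) := by
    rw [mulVec_add, dotProduct_add, add_dotProduct, add_dotProduct, dotProduct_mulVec y,
      ← mulVec_transpose, hQT, dotProduct_comm (Q *ᵥ y)]
    ring
  have hpos : 0 < z ⬝ᵥ z + y ⬝ᵥ y := by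
    have hz := dotProduct_self_nonneg z
    have hy := dotProduct_self_nonneg y
    refine lt_of_le_of_ne (by linarith) (Ne.symm fun h ↦ hx ?_)
    rw [dotProduct_self_eq_zero.mp (by linarith : z ⬝ᵥ z = 0),
      dotProduct_self_eq_zero.mp (by linarith : y ⬝ᵥ y = 0), add_zero]
  have hneg := mul_add_two_mul_add_mul_neg hΛ₂ hΛ₃₀ hdisc (dotProduct_self_nonneg z)
    (dotProduct_self_nonneg y) hpos (hQ.sq_dotProduct_mulVec_le hΛ₃ z y)
  rw [star_trivial, neg_mulVec, dotProduct_neg, sub_mulVec, dotProduct_sub, smul_mulVec,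
    dotProduct_smul, smul_eq_mul, hQzy]
  nlinarith [hconst v, hQ.dotProduct_mulVec_le hΛ₁ y, mul_le_mul_of_nonneg_left
    (le_const_add_dotProduct_kronecker_one_mulVec hS hker hgap v hy) hγ₀.le]

end Consensus

end Matrix

theorem stmt_13_general (l q : ℕ) (hl : 2 ≤ l) (hq : 1 ≤ q)
    (𝓛 : Matrix (Fin l) (Fin l) ℝ)
    (hker : ∀ x : Fin l → ℝ, (𝓛 + 𝓛ᵀ).mulVec x = 0 ↔ ∃ c : ℝ, x = fun _ => c)
    (lam₂ : ℝ) (hlam₂pos : 0 < lam₂)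
    (hlam₂min : ∀ μ ∈ spectrum ℝ (𝓛 + 𝓛ᵀ), μ ≠ 0 → lam₂ ≤ μ)
    (Nbar Pbar : Matrix (Fin q) (Fin q) ℝ)
    (hPbar : Pbar.PosDef)
    (Ns : Fin l → Matrix (Fin q) (Fin q) ℝ)
    (hsum : ∑ i, Ns i = (l : ℝ) • Nbar)
    (N M : Matrix (Fin l × Fin q) (Fin l × Fin q) ℝ)
    (hN : N = Matrix.of fun a b => if a.1 = b.1 then Ns a.1 a.2 b.2 else 0)
    (hM : M = (1 : Matrix (Fin l) (Fin l) ℝ) ⊗ₖ Pbar⁻¹)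
    (Λ₁ Λ₂ Λ₃ : ℝ)
    (hΛ₁max : ∀ μ ∈ spectrum ℝ (Nᵀ * M⁻¹ + M⁻¹ * N), μ ≤ Λ₁)
    (hΛ₂neg : Λ₂ < 0)
    (hΛ₂max : ∀ μ ∈ spectrum ℝ (Nbarᵀ * Pbar + Pbar * Nbar), μ ≤ Λ₂)
    (hΛ₃max : ∀ μ ∈ spectrum ℝ ((Nᵀ * M⁻¹ + M⁻¹ * N) ^ 2), μ ≤ Λ₃) :
    ∀ γ : ℝ, (Λ₁ - Λ₃ / Λ₂) / lam₂ < γ →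
      ∀ μ ∈ spectrum ℂ
        ((N - γ • (M * (𝓛 ⊗ₖ (1 : Matrix (Fin q) (Fin q) ℝ)))).map Complex.ofReal),
        μ.re < 0 := by
  intro γ hγ μ hμ
  have : Nonempty (Fin l) := ⟨⟨0, by omega⟩⟩
  have : Nonempty (Fin q) := ⟨⟨0, hq⟩⟩
  have hMpos : M.PosDef := hM ▸ PosDef.one.kronecker hPbar.inv
  have hPbar_det : IsUnit Pbar.det := (isUnit_iff_isUnit_det _).mp hPbar.isUnit
  have hMinv : M⁻¹ = blkdiag fun _ ↦ Pbar := by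
    rw [hM, inv_kronecker, inv_one, nonsing_inv_nonsing_inv _ hPbar_det, one_kronecker_eq_blkdiag]
  have hQ : Nᵀ * M⁻¹ + M⁻¹ * N = blkdiag fun i ↦ (Ns i)ᵀ * Pbar + Pbar * Ns i := by
    have hN' : N = blkdiag Ns := hN.trans <| by ext ⟨i, s⟩ ⟨j, t⟩; simp [blkdiag_apply]
    rw [hMinv, hN', transpose_blkdiag, blkdiag_mul, blkdiag_mul, blkdiag_add]
  have hsumQ : ∑ i, ((Ns i)ᵀ * Pbar + Pbar * Ns i) =
      (Fintype.card (Fin l) : ℝ) • (Nbarᵀ * Pbar + Pbar * Nbar) := by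
    rw [Finset.sum_add_distrib, ← Finset.sum_mul, ← Finset.mul_sum, ← transpose_sum, hsum,
      Fintype.card_fin, transpose_smul, Matrix.smul_mul, Matrix.mul_smul, smul_add]
  refine re_lt_zero_of_mem_spectrum_of_lyapunov hMpos.inv ?_ hμ
  rw [transpose_sub_smul_mul_mul_inv_add _ _ _ _ ?_ ((isUnit_iff_isUnit_det _).mp hMpos.isUnit),
    ← kroneckerMap_transpose, transpose_one, ← add_kronecker, add_comm 𝓛ᵀ]
  · refine posDef_neg_sub_smul_kronecker_one (isHermitian_transpose_mul_add_mul hMpos.inv.1 N)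
      (isHermitian_add_transpose_self 𝓛) hker hlam₂pos hlam₂min hΛ₁max hΛ₂neg (fun v ↦ ?_)
      hΛ₃max hγ
    rw [hQ]
    exact const_dotProduct_blkdiag_mulVec_const_le
      (isHermitian_transpose_mul_add_mul hPbar.1 Nbar) hsumQ hΛ₂max v
  · rw [← conjTranspose_eq_transpose_of_trivial, hMpos.1.eq]

/-- Stability of the coupled error dynamics: with `S = 𝓛 + 𝓛ᵀ`
positive semidefinite with kernel spanned by the all-ones vector and smallest nonzero
eigenvalue `λ₂ > 0`, `P̄` symmetric positive definite with `N̄ᵀP̄ + P̄N̄` negative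
definite, `∑ N_i = l·N̄`, `N = blkdiag(N₁,…,N_l)`, `M = I_l ⊗ P̄⁻¹`, and `Λ₁, Λ₂ < 0, Λ₃`
the largest eigenvalues of `NᵀM⁻¹ + M⁻¹N`, `N̄ᵀP̄ + P̄N̄`, `(NᵀM⁻¹ + M⁻¹N)²`
respectively, every `γ > (Λ₁ − Λ₃/Λ₂)/λ₂` makes `N − γM(𝓛 ⊗ I_q)` Hurwitz. -/
theorem stmt_13 (l q : ℕ) (hl : 2 ≤ l) (hq : 1 ≤ q)
    (𝓛 : Matrix (Fin l) (Fin l) ℝ)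
    (hS : (𝓛 + 𝓛ᵀ).PosSemidef)
    (hker : ∀ x : Fin l → ℝ, (𝓛 + 𝓛ᵀ).mulVec x = 0 ↔ ∃ c : ℝ, x = fun _ => c)
    (lam₂ : ℝ) (hlam₂pos : 0 < lam₂)
    (hlam₂mem : lam₂ ∈ spectrum ℝ (𝓛 + 𝓛ᵀ))
    (hlam₂min : ∀ μ ∈ spectrum ℝ (𝓛 + 𝓛ᵀ), μ ≠ 0 → lam₂ ≤ μ)
    (Nbar Pbar : Matrix (Fin q) (Fin q) ℝ)
    (hPbar : Pbar.PosDef) (hPbarSymm : Pbar.IsSymm)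
    (hLyap : (-(Nbarᵀ * Pbar + Pbar * Nbar)).PosDef)
    (Ns : Fin l → Matrix (Fin q) (Fin q) ℝ)
    (hsum : ∑ i, Ns i = (l : ℝ) • Nbar)
    (N M : Matrix (Fin l × Fin q) (Fin l × Fin q) ℝ)
    (hN : N = Matrix.of fun a b => if a.1 = b.1 then Ns a.1 a.2 b.2 else 0)
    (hM : M = (1 : Matrix (Fin l) (Fin l) ℝ) ⊗ₖ Pbar⁻¹)
    (Λ₁ Λ₂ Λ₃ : ℝ)
    (hΛ₁mem : Λ₁ ∈ spectrum ℝ (Nᵀ * M⁻¹ + M⁻¹ * N))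
    (hΛ₁max : ∀ μ ∈ spectrum ℝ (Nᵀ * M⁻¹ + M⁻¹ * N), μ ≤ Λ₁)
    (hΛ₂neg : Λ₂ < 0)
    (hΛ₂mem : Λ₂ ∈ spectrum ℝ (Nbarᵀ * Pbar + Pbar * Nbar))
    (hΛ₂max : ∀ μ ∈ spectrum ℝ (Nbarᵀ * Pbar + Pbar * Nbar), μ ≤ Λ₂)
    (hΛ₃mem : Λ₃ ∈ spectrum ℝ ((Nᵀ * M⁻¹ + M⁻¹ * N) ^ 2))
    (hΛ₃max : ∀ μ ∈ spectrum ℝ ((Nᵀ * M⁻¹ + M⁻¹ * N) ^ 2), μ ≤ Λ₃) :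
    ∀ γ : ℝ, (Λ₁ - Λ₃ / Λ₂) / lam₂ < γ →
      ∀ μ ∈ spectrum ℂ
        ((N - γ • (M * (𝓛 ⊗ₖ (1 : Matrix (Fin q) (Fin q) ℝ)))).map Complex.ofReal),
        μ.re < 0 :=
  stmt_13_general l q hl hq 𝓛 hker lam₂ hlam₂pos hlam₂min Nbar Pbar hPbar Ns hsum N M hN hM Λ₁ Λ₂ Λ₃
    hΛ₁max hΛ₂neg hΛ₂max hΛ₃max
end

section
/- Let A ∈ ℝ^{n×n}, C ∈ ℝ^{p×n}, K ∈ ℝ^{r×n}, and suppose T ∈ ℝ^{q×n}, L ∈ ℝ^{q×p}, N ∈ ℝ^{q×q}, R ∈ ℝ^{r×q} satisfy NT + LC = TA, R = KTᵀ, KTᵀT = K, and every complex eigenvalue of N has negative real part. Let B ∈ ℝ^{n×m}, D ∈ ℝ^{p×m} and set H := TB − LD. Then for every continuous u : ℝ → ℝ^m and all differentiable x : ℝ → ℝⁿ, w : ℝ → ℝ^q satisfying x'(t) = Ax(t) + Bu(t) and w'(t) = Nw(t) + Hu(t) + L(Cx(t) + Du(t)) for all t ≥ 0, the error e₁(t)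 := w(t) − Tx(t) satisfies e₁'(t) = N e₁(t) for all t ≥ 0, and consequently Rw(t) − Kx(t) = R e₁(t) → 0 as t → ∞. -/
/-! The error `e = w - Tx` obeys `e' = Ne`: the relations `NT + LC = TA` and `H = TB - LD` cancel
every term in `x` and `u`. Since `RT = KTᵀT = K`, also `Rw - Kx = Re`, so it suffices that
`e(t) = exp(tN) e(0) → 0`. Over `ℂ` every vector is a sum of generalized eigenvectors of `N`, and
if `(N - μ)^k v = 0` then `exp(tN) v = e^{tμ} ∑_{j<k} t^j/j! (N - μ)^j v`, which decays because
`Re μ < 0`. -/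

open Matrix NormedSpace Filter Topology
open scoped Nat

attribute [local instance] Matrix.linftyOpNormedRing Matrix.linftyOpNormedAlgebra

theorem exp_eq_cexp_smul_exp_sub_algebraMap {𝔸 : Type*} [NormedRing 𝔸] [NormedAlgebra ℂ 𝔸]
    [CompleteSpace 𝔸] (a : 𝔸) (c : ℂ) :
    exp a = Complex.exp c • exp (a - algebraMap ℂ 𝔸 c) := by
  let _ : NormedAlgebra ℚ 𝔸 := .restrictScalars ℚ ℂ 𝔸
  conv_lhs => rw [← add_sub_cancel (algebraMap ℂ 𝔸 c) a]
  rw [NormedSpace.exp_add_of_commute (Algebra.commutes c _), ← algebraMap_exp_comm,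
    Algebra.smul_def, Complex.exp_eq_exp_ℂ]

theorem Complex.tendsto_pow_mul_exp_mul_atTop_nhds_zero {μ : ℂ} (hμ : μ.re < 0) (j : ℕ) :
    Tendsto (fun t : ℝ => (t : ℂ) ^ j * Complex.exp (t * μ)) atTop (𝓝 0) := by
  rw [tendsto_zero_iff_norm_tendsto_zero]
  refine (tendsto_rpow_mul_exp_neg_mul_atTop_nhds_zero j (-μ.re) (by linarith)).congr' ?_
  filter_upwards [eventually_ge_atTop 0] with t ht
  rw [norm_mul, norm_pow, Complex.norm_exp, Complex.norm_real, Real.norm_of_nonneg ht,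
    Real.rpow_natCast]
  simp [mul_comm]

namespace Matrix

variable {ι : Type*} [Fintype ι] [DecidableEq ι]

def IsHurwitz (N : Matrix ι ι ℂ) : Prop :=
  ∀ μ ∈ spectrum ℂ N, μ.re < 0

theorem mem_spectrum_of_pow_sub_smul_one_mulVec_eq_zero {R : Type*} [CommRing R]
    {N : Matrix ι ι R} {μ : R} {k : ℕ} {v : ι → R} (hv0 : v ≠ 0)
    (hv : (N - μ • 1) ^ k *ᵥ v = 0) : μ ∈ spectrum R N := by
  rw [spectrum.mem_iff, Algebra.algebraMap_eq_smul_one, ← IsUnit.neg_iff, neg_sub]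
  intro hunit
  obtain ⟨u, hu⟩ := hunit.pow k
  apply hv0
  rw [← one_mulVec v, ← u.inv_mul, ← mulVec_mulVec, hu, hv, mulVec_zero]

theorem exp_smul_mulVec_eq_sum_of_pow_mulVec_eq_zero {𝕜 : Type*} [RCLike 𝕜]
    (M : Matrix ι ι 𝕜) (z : 𝕜) {v : ι → 𝕜} {k : ℕ} (hv : M ^ k *ᵥ v = 0) :
    exp (z • M) *ᵥ v = ∑ j ∈ Finset.range k, (z ^ j / j !) • (M ^ j *ᵥ v) := by
  let evalAt : Matrix ι ι 𝕜 →L[𝕜] ι → 𝕜 :=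
    LinearMap.toContinuousLinearMap ((mulVecBilin 𝕜 𝕜).flip v)
  have hterm : ∀ j, evalAt ((j !⁻¹ : 𝕜) • (z • M) ^ j) = (z ^ j / j !) • (M ^ j *ᵥ v) := by
    intro j
    simp only [evalAt, LinearMap.coe_toContinuousLinearMap', LinearMap.flip_apply,
      mulVecBilin_apply, smul_pow, smul_smul, smul_mulVec, div_eq_inv_mul]
  have hvanish : ∀ j ∉ Finset.range k, evalAt ((j !⁻¹ : 𝕜) • (z • M) ^ j) = 0 := by
    intro j hj
    rw [Finset.mem_range, not_lt] at hj
    rw [hterm, ← Nat.sub_add_cancel hj, pow_add M, ← mulVec_mulVec, hv, mulVec_zero, smul_zero]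
  rw [← Finset.sum_congr rfl fun j _ => hterm j]
  exact ((exp_series_hasSum_exp' (𝕂 := 𝕜) (z • M)).mapL evalAt).unique
    (hasSum_sum_of_ne_finset_zero hvanish)

theorem tendsto_exp_smul_mulVec_of_pow_sub_smul_one_mulVec_eq_zero (N : Matrix ι ι ℂ)
    {μ : ℂ} (hμ : μ.re < 0) {k : ℕ} {v : ι → ℂ} (hv : (N - μ • 1) ^ k *ᵥ v = 0) :
    Tendsto (fun t : ℝ => exp ((t : ℂ) • N) *ᵥ v) atTop (𝓝 0) := by
  have hexp : ∀ t : ℝ, exp ((t : ℂ) • N) *ᵥ v =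
      ∑ j ∈ Finset.range k, ((t : ℂ) ^ j * Complex.exp (t * μ) / j !) • ((N - μ • 1) ^ j *ᵥ v) := by
    intro t
    have hshift : (t : ℂ) • N - algebraMap ℂ _ (t * μ) = (t : ℂ) • (N - μ • 1) := by
      rw [Algebra.algebraMap_eq_smul_one, smul_sub, smul_smul]
    have hsplit : exp ((t : ℂ) • N) = Complex.exp (t * μ) • exp ((t : ℂ) • (N - μ • 1)) := by
      rw [← hshift]
      exact exp_eq_cexp_smul_exp_sub_algebraMap _ _
    rw [hsplit, smul_mulVec, exp_smul_mulVec_eq_sum_of_pow_mulVec_eq_zero _ _ hv, Finset.smul_sum]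
    refine Finset.sum_congr rfl fun j _ => ?_
    rw [smul_smul, mul_div_assoc', mul_comm]
  simp_rw [hexp]
  simpa using tendsto_finsetSum (Finset.range k) fun j _ =>
    ((Complex.tendsto_pow_mul_exp_mul_atTop_nhds_zero hμ j).div_const (j ! : ℂ)).smul_const
      ((N - μ • 1) ^ j *ᵥ v)

theorem IsHurwitz.tendsto_exp_smul_mulVec {N : Matrix ι ι ℂ} (hN : N.IsHurwitz) (v : ι → ℂ) :
    Tendsto (fun t : ℝ => exp ((t : ℂ) • N) *ᵥ v) atTop (𝓝 0) := by
  have hv : v ∈ ⨆ μ, Module.End.maxGenEigenspace (toLinAlgEquiv' N : Module.End ℂ (ι → ℂ)) μ := by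
    rw [Module.End.iSup_maxGenEigenspace_eq_top]
    trivial
  induction hv using Submodule.iSup_induction' with
  | mem μ v hv =>
    obtain ⟨k, hk⟩ := (Module.End.mem_maxGenEigenspace _ _ _).mp hv
    have hk : (N - μ • 1) ^ k *ᵥ v = 0 := by
      rw [← toLinAlgEquiv'_apply, map_pow, map_sub, map_smul, map_one]
      exact hk
    rcases eq_or_ne v 0 with rfl | hv0
    · simp
    · exact tendsto_exp_smul_mulVec_of_pow_sub_smul_one_mulVec_eq_zero N
        (hN μ (mem_spectrum_of_pow_sub_smul_one_mulVec_eq_zero hv0 hk)) hk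
  | zero => simp
  | add v w _ _ hv hw => simpa [mulVec_add] using hv.add hw

theorem exp_map_ofReal (N : Matrix ι ι ℝ) :
    exp (N.map Complex.ofReal) = (exp N).map Complex.ofReal :=
  (map_exp Complex.ofRealHom.mapMatrix (continuous_id.matrix_map Complex.continuous_ofReal) N).symm

theorem IsHurwitz.tendsto_exp_real_smul_mulVec {N : Matrix ι ι ℝ}
    (hN : (N.map Complex.ofReal).IsHurwitz) (v : ι → ℝ) :
    Tendsto (fun t : ℝ => exp (t • N) *ᵥ v) atTop (𝓝 0) := by
  have hcomplexify : ∀ t : ℝ, exp ((t : ℂ) • N.map Complex.ofReal) *ᵥ (Complex.ofReal ∘ v) =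
      Complex.ofReal ∘ (exp (t • N) *ᵥ v) := by
    intro t
    ext i
    have hsmul : (t : ℂ) • N.map Complex.ofReal = (t • N).map Complex.ofReal := by
      ext; simp
    rw [hsmul, exp_map_ofReal]
    exact (RingHom.map_mulVec Complex.ofRealHom _ _ i).symm
  have hc := hN.tendsto_exp_smul_mulVec (Complex.ofReal ∘ v)
  simp_rw [hcomplexify, tendsto_pi_nhds] at hc
  rw [tendsto_pi_nhds]
  intro i
  simpa [Function.comp_def] using (Complex.continuous_re.tendsto 0).comp (hc i)

theorem eq_exp_smul_mulVec_of_hasDerivAt {N : Matrix ι ι ℝ} {e : ℝ → ι → ℝ}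
    (he : ∀ s, 0 ≤ s → HasDerivAt e (N *ᵥ e s) s) {t : ℝ} (ht : 0 ≤ t) :
    e t = exp (t • N) *ᵥ e 0 := by
  let B := (mulVecBilin ℝ ℝ : Matrix ι ι ℝ →ₗ[ℝ] _).toContinuousBilinearMap
  have hderiv : ∀ s, 0 ≤ s → HasDerivAt (fun s => exp ((-s) • N) *ᵥ e s) 0 s := by
    intro s hs
    have hexp : HasDerivAt (fun s : ℝ => exp ((-s) • N)) ((-1 : ℝ) • (exp ((-s) • N) * N)) s :=
      (hasDerivAt_exp_smul_const N (-s)).scomp s (hasDerivAt_neg s)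
    have hcancel :
        B (exp ((-s) • N)) (N *ᵥ e s) + B ((-1 : ℝ) • (exp ((-s) • N) * N)) (e s) = 0 := by
      simp [B, mulVec_mulVec]
    exact (B.hasDerivAt_of_bilinear (fun _ => hexp) (fun _ => he s hs)).congr_deriv hcancel
  have hconst : exp ((-t) • N) *ᵥ e t = e 0 := by
    simpa using constant_of_has_deriv_right_zero
      (fun s hs => (hderiv s hs.1).continuousAt.continuousWithinAt)
      (fun s hs => (hderiv s hs.1).hasDerivWithinAt) t ⟨ht, le_rfl⟩
  have hinv : exp (t • N) * exp ((-t) • N) = 1 := by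
    rw [← Matrix.exp_add_of_commute _ _ (((Commute.refl N).smul_left t).smul_right (-t)),
      ← add_smul, add_neg_cancel, zero_smul, exp_zero]
  rw [← hconst, mulVec_mulVec, hinv, one_mulVec]

end Matrix

theorem hasDerivAt_observer_error {n m p q : Type*} [Fintype n] [Fintype m] [Fintype p]
    [Fintype q] {A : Matrix n n ℝ} {B : Matrix n m ℝ} {C : Matrix p n ℝ} {D : Matrix p m ℝ}
    {T : Matrix q n ℝ} {L : Matrix q p ℝ} {N : Matrix q q ℝ} (hNT : N * T + L * C = T * A)
    {x : ℝ → n → ℝ} {w : ℝ → q → ℝ} {u : ℝ → m → ℝ} {t : ℝ}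
    (hx : HasDerivAt x (A *ᵥ x t + B *ᵥ u t) t)
    (hw : HasDerivAt w (N *ᵥ w t + (T * B - L * D) *ᵥ u t + L *ᵥ (C *ᵥ x t + D *ᵥ u t)) t) :
    HasDerivAt (fun s => w s - T *ᵥ x s) (N *ᵥ (w t - T *ᵥ x t)) t := by
  have hTx : HasDerivAt (fun s => T *ᵥ x s) (T *ᵥ (A *ᵥ x t + B *ᵥ u t)) t :=
    (LinearMap.toContinuousLinearMap T.mulVecLin).hasFDerivAt.comp_hasDerivAt t hx
  refine (hw.sub hTx).congr_deriv ?_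
  simp only [sub_mulVec, add_mulVec, mulVec_add, mulVec_sub, mulVec_mulVec, ← hNT]
  abel

/-- If `NT + LC = TA`, `R = KTᵀ`, `KTᵀT = K`, `N` is Hurwitz and
`H = TB − LD`, then along any solutions of the plant `x' = Ax + Bu` and the estimator
`w' = Nw + Hu + L(Cx + Du)`, the error `e₁ = w − Tx` satisfies `e₁' = N e₁` on
`[0, ∞)` and `Rw(t) − Kx(t) = R e₁(t) → 0` as `t → ∞`. -/
theorem stmt_15 (n m p q r : ℕ)
    (A : Matrix (Fin n) (Fin n) ℝ) (C : Matrix (Fin p) (Fin n) ℝ)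
    (K : Matrix (Fin r) (Fin n) ℝ)
    (T : Matrix (Fin q) (Fin n) ℝ) (L : Matrix (Fin q) (Fin p) ℝ)
    (N : Matrix (Fin q) (Fin q) ℝ) (R : Matrix (Fin r) (Fin q) ℝ)
    (hNT : N * T + L * C = T * A)
    (hR : R = K * Tᵀ)
    (hKT : K * Tᵀ * T = K)
    (hN : ∀ μ ∈ spectrum ℂ (N.map Complex.ofReal), μ.re < 0)
    (B : Matrix (Fin n) (Fin m) ℝ) (D : Matrix (Fin p) (Fin m) ℝ)
    (H : Matrix (Fin q) (Fin m) ℝ) (hH : H = T * B - L * D) :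
    ∀ u : ℝ → (Fin m → ℝ), Continuous u →
    ∀ x : ℝ → (Fin n → ℝ), Differentiable ℝ x →
    ∀ w : ℝ → (Fin q → ℝ), Differentiable ℝ w →
    (∀ t : ℝ, 0 ≤ t → deriv x t = A.mulVec (x t) + B.mulVec (u t)) →
    (∀ t : ℝ, 0 ≤ t →
      deriv w t = N.mulVec (w t) + H.mulVec (u t) +
        L.mulVec (C.mulVec (x t) + D.mulVec (u t))) →
    (∀ t : ℝ, 0 ≤ t →
      deriv (fun s => w s - T.mulVec (x s)) t = N.mulVec (w t - T.mulVec (x t))) ∧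
    Filter.Tendsto (fun t => R.mulVec (w t) - K.mulVec (x t)) Filter.atTop (nhds 0) := by
  intro u _ x hx w hw hxode hwode
  subst hH
  set e := fun s => w s - T *ᵥ x s
  have he : ∀ t, 0 ≤ t → HasDerivAt e (N *ᵥ e t) t := fun t ht =>
    hasDerivAt_observer_error hNT (hxode t ht ▸ (hx t).hasDerivAt)
      (hwode t ht ▸ (hw t).hasDerivAt)
  refine ⟨fun t ht => (he t ht).deriv, ?_⟩
  have hRe : (fun t => R *ᵥ w t - K *ᵥ x t) = fun t => R *ᵥ e t := by
    ext1 t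
    rw [mulVec_sub, mulVec_mulVec, hR, hKT]
  have he_tendsto : Tendsto e atTop (𝓝 0) :=
    (IsHurwitz.tendsto_exp_real_smul_mulVec hN (e 0)).congr' <|
      (eventually_ge_atTop 0).mono fun t ht => (eq_exp_smul_mulVec_of_hasDerivAt he ht).symm
  rw [hRe]
  exact ((continuous_const.matrix_mulVec continuous_id).tendsto' 0 0 (mulVec_zero R)).comp
    he_tendsto
end
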